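/- arXiv:math/0606032 — 5 statements merged into one kernel-verified Lean document; each statement's English description precedes it below -/
import Mathlib

section
/- With 𝔉 = N_𝔤(𝔥) ∩ 𝔥 and 𝔮⁽¹⁾ = { w ∈ 𝔮 : [w, σ𝔮] ⊆ 𝔮 + σ𝔮 }, one has (𝔮⁽¹⁾ + σ𝔮⁽¹⁾) ∩ 𝔤 = 𝔉. -/
/-- With `𝔉 = N_𝔤(𝔥) ∩ 𝔥` and `𝔮⁽¹⁾ = {w ∈ 𝔮 : [w, σ𝔮] ⊆ 𝔮 + σ𝔮}`,
one has `(𝔮⁽¹⁾ + σ𝔮⁽¹⁾) ∩ 𝔤 = 𝔉`, where `𝔤 = {x | σ x = x}` and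
`𝔥 = (𝔮 + σ𝔮) ∩ 𝔤`. -/
theorem q1_plus_sigma_q1_real_points_eq_F
    (L : Type*) [LieRing L] [LieAlgebra ℂ L]
    (σ : L → L)
    (hadd : ∀ x y : L, σ (x + y) = σ x + σ y)
    (hsmul : ∀ (c : ℂ) (x : L), σ (c • x) = (starRingEnd ℂ) c • σ x)
    (hbr : ∀ x y : L, σ ⁅x, y⁆ = ⁅σ x, σ y⁆)
    (hinv : ∀ x : L, σ (σ x) = x)
    (q : LieSubalgebra ℂ L)
    (H F Q1 : Set L)
    (hH : H = {x | (∃ a ∈ q, ∃ b ∈ q, x = a + σ b) ∧ σ x = x})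
    (hF : F = {v | v ∈ H ∧ ∀ x ∈ H, ⁅v, x⁆ ∈ H})
    (hQ1 : Q1 = {w | w ∈ q ∧ ∀ u ∈ q, ∃ a ∈ q, ∃ b ∈ q, ⁅w, σ u⁆ = a + σ b}) :
    {x | (∃ a ∈ Q1, ∃ b ∈ Q1, x = a + σ b) ∧ σ x = x} = F := by
  subst hH hF hQ1
  have hbr' : ∀ x y : L, ⁅σ x, y⁆ = σ ⁅x, σ y⁆ := fun x y => by
    rw [hbr, hinv]
  have hbr'' : ∀ x y : L, ⁅σ x, σ y⁆ = σ ⁅x, y⁆ := fun x y => (hbr x y).symm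
  ext v
  simp only [Set.mem_setOf_eq]
  constructor
  · rintro ⟨⟨a, ⟨haq, ha1⟩, b, ⟨hbq, hb1⟩, rfl⟩, hfix⟩
    refine ⟨⟨⟨a, haq, b, hbq, rfl⟩, hfix⟩, ?_⟩
    rintro x ⟨⟨c, hcq, d, hdq, rfl⟩, hxfix⟩
    obtain ⟨p1, hp1, p2, hp2, he1⟩ := ha1 d hdq
    obtain ⟨p3, hp3, p4, hp4, he2⟩ := hb1 c hcq
    refine ⟨⟨⁅a, c⁆ + p1 + p4, q.add_mem (q.add_mem (q.lie_mem haq hcq) hp1) hp4,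
      p2 + p3 + ⁅b, d⁆, q.add_mem (q.add_mem hp2 hp3) (q.lie_mem hbq hdq), ?_⟩, ?_⟩
    · have e3 : ⁅σ b, c⁆ = σ p3 + p4 := by
        rw [hbr' b c, he2, hadd, hinv]
      have e4 : ⁅σ b, σ d⁆ = σ ⁅b, d⁆ := hbr'' b d
      rw [hadd (p2 + p3), hadd p2 p3, add_lie, lie_add, lie_add, he1, e3, e4]
      abel
    · rw [hbr, hfix, hxfix]
  · rintro ⟨⟨⟨a, haq, b, hbq, rfl⟩, hfix⟩, hnorm⟩
    have hσhalf : (starRingEnd ℂ) (1 / 2 : ℂ) = 1 / 2 := by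
      rw [map_div₀, map_one, Complex.conj_ofNat]
    set w : L := (1 / 2 : ℂ) • a + (1 / 2 : ℂ) • b with hw
    have hwq : w ∈ q := q.add_mem (q.smul_mem _ haq) (q.smul_mem _ hbq)
    have hkey : σ a + b = a + σ b := by
      have h := hfix
      rw [hadd, hinv] at h
      exact h
    have hσw : σ w = (1 / 2 : ℂ) • σ a + (1 / 2 : ℂ) • σ b := by
      rw [hw, hadd, hsmul, hsmul, hσhalf]
    have hvw : a + σ b = w + σ w := by
      rw [hw, hσw]
      linear_combination (norm := module) (-(1 / 2 : ℂ)) • hkey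
    have hwQ1 : w ∈ q ∧ ∀ u ∈ q, ∃ c ∈ q, ∃ d ∈ q, ⁅w, σ u⁆ = c + σ d := by
      refine ⟨hwq, fun u huq => ?_⟩
      have h1mem : (∃ a ∈ q, ∃ b ∈ q, u + σ u = a + σ b) ∧ σ (u + σ u) = u + σ u :=
        ⟨⟨u, huq, u, huq, rfl⟩, by rw [hadd, hinv, add_comm]⟩
      have h2mem : (∃ a ∈ q, ∃ b ∈ q,
            Complex.I • u + σ (Complex.I • u) = a + σ b) ∧
          σ (Complex.I • u + σ (Complex.I • u)) = Complex.I • u + σ (Complex.I • u) :=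
        ⟨⟨_, q.smul_mem _ huq, _, q.smul_mem _ huq, rfl⟩, by rw [hadd, hinv, add_comm]⟩
      obtain ⟨⟨c1, hc1, d1, hd1, heq1⟩, -⟩ := hnorm _ h1mem
      obtain ⟨⟨c2, hc2, d2, hd2, heq2⟩, -⟩ := hnorm _ h2mem
      rw [hvw] at heq1 heq2
      have hσI : σ (Complex.I • u) = (-Complex.I) • σ u := by
        rw [hsmul]; simp
      have lhs1 : ⁅w + σ w, u + σ u⁆
          = ⁅w, u⁆ + ⁅w, σ u⁆ + σ ⁅w, σ u⁆ + σ ⁅w, u⁆ := by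
        rw [add_lie, lie_add, lie_add, hbr' w u, hbr' w (σ u), hinv u]
        abel
      have lhs2 : ⁅w + σ w, Complex.I • u + σ (Complex.I • u)⁆
          = Complex.I • ⁅w, u⁆ + (-Complex.I) • ⁅w, σ u⁆
            + Complex.I • σ ⁅w, σ u⁆ + (-Complex.I) • σ ⁅w, u⁆ := by
        rw [hσI, add_lie, lie_add, lie_add, lie_smul, lie_smul, lie_smul, lie_smul,
          hbr' w u, hbr'' w u]
        module
      rw [lhs1] at heq1
      rw [lhs2] at heq2
      refine ⟨(1 / 2 : ℂ) • c1 + (Complex.I / 2) • c2,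
        q.add_mem (q.smul_mem _ hc1) (q.smul_mem _ hc2),
        (1 / 2 : ℂ) • d1 + (-Complex.I / 2) • d2 + (-1 : ℂ) • ⁅w, u⁆,
        q.add_mem (q.add_mem (q.smul_mem _ hd1) (q.smul_mem _ hd2))
          (q.smul_mem _ (q.lie_mem hwq huq)), ?_⟩
      have heq3 := congrArg (fun z : L => (-Complex.I) • z) heq2
      simp only [smul_add, smul_smul] at heq3
      rw [show (-Complex.I * Complex.I : ℂ) = 1 from by
            linear_combination (-1 : ℂ) * Complex.I_mul_I,
          show (-Complex.I * -Complex.I : ℂ) = -1 from by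
            linear_combination Complex.I_mul_I] at heq3
      rw [hadd, hadd, hsmul, hsmul, hsmul,
        show (starRingEnd ℂ) (1 / 2 : ℂ) = 1 / 2 from by
          rw [map_div₀, map_one, Complex.conj_ofNat],
        show (starRingEnd ℂ) (-Complex.I / 2) = Complex.I / 2 from by
          rw [map_div₀, map_neg, Complex.conj_I, Complex.conj_ofNat, neg_neg],
        show (starRingEnd ℂ) (-1 : ℂ) = -1 from by norm_num]
      linear_combination (norm := module) (1 / 2 : ℂ) • heq1 + (-(1 / 2) : ℂ) • heq3
    exact ⟨⟨w, hwQ1, w, hwQ1, hvw⟩, hfix⟩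
end

section
/- If the filtration stabilizes at some n, i.e., 𝔮⁽ⁿ⁾ = 𝔮⁽ⁿ⁺¹⁾, then 𝔯 := σ𝔮⁽ⁿ⁾ + 𝔮 is a complex Lie subalgebra of 𝔩 satisfying 𝔮 ⊆ 𝔯 ⊆ 𝔮 + σ𝔮 and 𝔯 + σ𝔯 = 𝔮 + σ𝔮. -/
/-- The recursively defined filtration `𝔮⁽⁰⁾ = 𝔮`,
`𝔮⁽ᵏ⁺¹⁾ = {w ∈ 𝔮⁽ᵏ⁾ : [w, σ𝔮] ⊆ 𝔮⁽ᵏ⁾ + σ𝔮}`. -/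
def qfilt {L : Type*} [LieRing L] (σ : L → L) (q : Set L) : ℕ → Set L
  | 0 => q
  | (k + 1) => {w | w ∈ qfilt σ q k ∧
      ∀ u ∈ q, ∃ a ∈ qfilt σ q k, ∃ b ∈ q, ⁅w, σ u⁆ = a + σ b}

/-- If the filtration stabilizes at `n`, then `𝔯 = σ𝔮⁽ⁿ⁾ + 𝔮` is a complex
Lie subalgebra of `𝔩` with `𝔮 ⊆ 𝔯 ⊆ 𝔮 + σ𝔮` and `𝔯 + σ𝔯 = 𝔮 + σ𝔮`. -/
theorem stabilized_gives_subalgebra_r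
    (L : Type*) [LieRing L] [LieAlgebra ℂ L]
    (σ : L → L)
    (hadd : ∀ x y : L, σ (x + y) = σ x + σ y)
    (hsmul : ∀ (c : ℂ) (x : L), σ (c • x) = (starRingEnd ℂ) c • σ x)
    (hbr : ∀ x y : L, σ ⁅x, y⁆ = ⁅σ x, σ y⁆)
    (hinv : ∀ x : L, σ (σ x) = x)
    (q : LieSubalgebra ℂ L) (n : ℕ)
    (hstab : qfilt σ (q : Set L) n = qfilt σ (q : Set L) (n + 1))
    (R : Set L)
    (hR : R = {x | ∃ a ∈ qfilt σ (q : Set L) n, ∃ b ∈ q, x = σ a + b}) :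
    (∀ x ∈ R, ∀ y ∈ R, x + y ∈ R) ∧
    (∀ (c : ℂ), ∀ x ∈ R, c • x ∈ R) ∧
    (∀ x ∈ R, ∀ y ∈ R, ⁅x, y⁆ ∈ R) ∧
    (q : Set L) ⊆ R ∧
    R ⊆ {x | ∃ a ∈ q, ∃ b ∈ q, x = a + σ b} ∧
    {x | ∃ a ∈ R, ∃ b ∈ R, x = a + σ b} = {x | ∃ a ∈ q, ∃ b ∈ q, x = a + σ b} := by
  -- basic facts about σ
  have hσ0 : σ 0 = 0 := by
    have h := hadd 0 0
    rw [add_zero] at h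
    exact (left_eq_add.mp h)
  have hσneg : ∀ x : L, σ (-x) = -σ x := by
    intro x
    have h := hadd (-x) x
    rw [neg_add_cancel, hσ0] at h
    exact eq_neg_of_add_eq_zero_left h.symm
  have hσsub : ∀ x y : L, σ (x - y) = σ x - σ y := by
    intro x y
    rw [sub_eq_add_neg, hadd, hσneg, sub_eq_add_neg]
  have hσsmul' : ∀ (c : ℂ) (x : L), c • σ x = σ ((starRingEnd ℂ) c • x) := by
    intro c x
    rw [hsmul, Complex.conj_conj]
  set F : ℕ → Set L := qfilt σ (q : Set L) with hF
  -- F k is a subalgebra contained in q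
  have key : ∀ k, (F k ⊆ (q : Set L)) ∧ (0 ∈ F k) ∧
      (∀ x ∈ F k, ∀ y ∈ F k, x + y ∈ F k) ∧
      (∀ (c : ℂ), ∀ x ∈ F k, c • x ∈ F k) ∧
      (∀ x ∈ F k, ∀ y ∈ F k, ⁅x, y⁆ ∈ F k) := by
    intro k
    induction k with
    | zero =>
      refine ⟨subset_rfl, q.zero_mem, ?_, ?_, ?_⟩
      · intro x hx y hy; exact q.add_mem hx hy
      · intro c x hx; exact q.smul_mem c hx
      · intro x hx y hy; exact q.lie_mem hx hy
    | succ k ih =>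
      obtain ⟨hsub, hzero, haddk, hsmulk, hliek⟩ := ih
      have hnegk : ∀ x ∈ F k, -x ∈ F k := by
        intro x hx
        have := hsmulk (-1 : ℂ) x hx
        rwa [neg_one_smul] at this
      have hsubk : ∀ x ∈ F k, ∀ y ∈ F k, x - y ∈ F k := by
        intro x hx y hy
        rw [sub_eq_add_neg]
        exact haddk x hx _ (hnegk y hy)
      refine ⟨fun x hx => hsub hx.1, ⟨hzero, ?_⟩, ?_, ?_, ?_⟩
      · intro u hu
        exact ⟨0, hzero, 0, q.zero_mem, by rw [zero_lie, hσ0, add_zero]⟩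
      · rintro x ⟨hx, hx'⟩ y ⟨hy, hy'⟩
        refine ⟨haddk x hx y hy, ?_⟩
        intro u hu
        obtain ⟨a, ha, b, hb, hab⟩ := hx' u hu
        obtain ⟨a', ha', b', hb', hab'⟩ := hy' u hu
        refine ⟨a + a', haddk a ha a' ha', b + b', q.add_mem hb hb', ?_⟩
        rw [add_lie, hab, hab', hadd]
        abel
      · rintro c x ⟨hx, hx'⟩
        refine ⟨hsmulk c x hx, ?_⟩
        intro u hu
        obtain ⟨a, ha, b, hb, hab⟩ := hx' u hu
        refine ⟨c • a, hsmulk c a ha, (starRingEnd ℂ) c • b, q.smul_mem _ hb, ?_⟩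
        rw [smul_lie, hab, smul_add, hσsmul']
      · rintro x ⟨hx, hx'⟩ y ⟨hy, hy'⟩
        refine ⟨hliek x hx y hy, ?_⟩
        intro u hu
        obtain ⟨a, ha, b, hb, hab⟩ := hx' u hu
        obtain ⟨a', ha', b', hb', hab'⟩ := hy' u hu
        obtain ⟨c, hc, d, hd, hcd⟩ := hx' b' hb'
        obtain ⟨c', hc', d', hd', hcd'⟩ := hy' b hb
        refine ⟨⁅x, a'⁆ + c - ⁅y, a⁆ - c',
          hsubk _ (hsubk _ (haddk _ (hliek x hx a' ha') c hc) _ (hliek y hy a ha)) c' hc',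
          d - d', q.sub_mem hd hd', ?_⟩
        rw [lie_lie, hab, hab', lie_add, lie_add, hcd, hcd', hσsub]
        abel
  obtain ⟨hFsub, hF0, hFadd, hFsmul, hFlie⟩ := key n
  -- stabilization property
  have hstab' : ∀ w ∈ F n, ∀ u ∈ q, ∃ a ∈ F n, ∃ b ∈ (q : Set L), ⁅w, σ u⁆ = a + σ b := by
    intro w hw u hu
    have hw' : w ∈ F (n + 1) := by rw [← hstab] at *; exact hw
    exact hw'.2 u hu
  -- key: ⁅σ a, b⁆ ∈ R for a ∈ F n, b ∈ q
  have hRbr : ∀ a ∈ F n, ∀ b ∈ (q : Set L), ⁅σ a, b⁆ ∈ R := by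
    intro a ha b hb
    obtain ⟨A, hA, B, hB, hAB⟩ := hstab' a ha b hb
    rw [hR]
    refine ⟨A, hA, B, hB, ?_⟩
    have : σ ⁅a, σ b⁆ = σ (A + σ B) := by rw [hAB]
    rw [hbr, hinv, hadd, hinv] at this
    exact this
  have hRadd : ∀ x ∈ R, ∀ y ∈ R, x + y ∈ R := by
    rw [hR]
    rintro x ⟨a, ha, b, hb, rfl⟩ y ⟨a', ha', b', hb', rfl⟩
    exact ⟨a + a', hFadd a ha a' ha', b + b', q.add_mem hb hb', by rw [hadd]; abel⟩
  have hRneg : ∀ x ∈ R, -x ∈ R := by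
    rw [hR]
    rintro x ⟨a, ha, b, hb, rfl⟩
    refine ⟨-a, ?_, -b, q.neg_mem hb, by rw [hσneg]; abel⟩
    have := hFsmul (-1 : ℂ) a ha
    rwa [neg_one_smul] at this
  have hqR : (q : Set L) ⊆ R := by
    rw [hR]
    intro x hx
    exact ⟨0, hF0, x, hx, by rw [hσ0, zero_add]⟩
  refine ⟨hRadd, ?_, ?_, hqR, ?_, ?_⟩
  · -- smul
    rw [hR]
    rintro c x ⟨a, ha, b, hb, rfl⟩
    exact ⟨(starRingEnd ℂ) c • a, hFsmul _ a ha, c • b, q.smul_mem c hb,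
      by rw [smul_add, hσsmul']⟩
  · -- bracket
    intro x hx y hy
    rw [hR] at hx hy
    obtain ⟨a, ha, b, hb, rfl⟩ := hx
    obtain ⟨a', ha', b', hb', rfl⟩ := hy
    have h1 : ⁅σ a, σ a'⁆ ∈ R := by
      rw [hR]
      exact ⟨⁅a, a'⁆, hFlie a ha a' ha', 0, q.zero_mem, by rw [hbr, add_zero]⟩
    have h2 : ⁅σ a, b'⁆ ∈ R := hRbr a ha b' hb'
    have h3 : ⁅b, σ a'⁆ ∈ R := by
      rw [← lie_skew]
      exact hRneg _ (hRbr a' ha' b hb)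
    have h4 : ⁅b, b'⁆ ∈ R := hqR (q.lie_mem hb hb')
    have : ⁅σ a + b, σ a' + b'⁆ = ⁅σ a, σ a'⁆ + ⁅σ a, b'⁆ + (⁅b, σ a'⁆ + ⁅b, b'⁆) := by
      rw [add_lie, lie_add, lie_add]
    rw [this]
    exact hRadd _ (hRadd _ h1 _ h2) _ (hRadd _ h3 _ h4)
  · -- R ⊆ q + σq
    rw [hR]
    rintro x ⟨a, ha, b, hb, rfl⟩
    exact ⟨b, hb, a, hFsub ha, by rw [add_comm]⟩
  · -- R + σR = q + σq
    ext x
    constructor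
    · rintro ⟨r, hr, r', hr', rfl⟩
      rw [hR] at hr hr'
      obtain ⟨a, ha, b, hb, rfl⟩ := hr
      obtain ⟨a', ha', b', hb', rfl⟩ := hr'
      refine ⟨b + a', q.add_mem hb (hFsub ha'), a + b', q.add_mem (hFsub ha) hb', ?_⟩
      rw [hadd, hinv, hadd]
      abel
    · rintro ⟨a, ha, b, hb, rfl⟩
      exact ⟨a, hqR ha, b, hqR hb, rfl⟩
end

section
/- If 𝔮⁽ⁿ⁾ = 𝔮⁽ⁿ⁺¹⁾ for some n, then 𝔮⁽ⁿ⁾ + σ𝔮 is a complex Lie subalgebra of 𝔩. -/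
section Aux

variable {L : Type*} [LieRing L] [LieAlgebra ℂ L] (σ : L → L)

lemma qfilt_closed
    (hadd : ∀ x y : L, σ (x + y) = σ x + σ y)
    (hsmul : ∀ (c : ℂ) (x : L), σ (c • x) = (starRingEnd ℂ) c • σ x)
    (q : LieSubalgebra ℂ L) (k : ℕ) :
    (0 ∈ qfilt σ (q : Set L) k) ∧
    (∀ x ∈ qfilt σ (q : Set L) k, ∀ y ∈ qfilt σ (q : Set L) k,
        x + y ∈ qfilt σ (q : Set L) k) ∧
    (∀ (c : ℂ), ∀ x ∈ qfilt σ (q : Set L) k, c • x ∈ qfilt σ (q : Set L) k) ∧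
    (∀ x ∈ qfilt σ (q : Set L) k, ∀ y ∈ qfilt σ (q : Set L) k,
        ⁅x, y⁆ ∈ qfilt σ (q : Set L) k) := by
  have hσ0 : σ 0 = 0 := by
    have := hsmul 0 0; simpa using this
  have hneg : ∀ x : L, σ (-x) = - σ x := by
    intro x
    have := hsmul (-1) x; simpa using this
  induction k with
  | zero =>
    exact ⟨q.zero_mem, fun x hx y hy => q.add_mem hx hy,
      fun c x hx => q.smul_mem c hx, fun x hx y hy => q.lie_mem hx hy⟩
  | succ k ih =>
    obtain ⟨h0, hA, hM, hB⟩ := ih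
    have hSub : ∀ x ∈ qfilt σ (q : Set L) k, ∀ y ∈ qfilt σ (q : Set L) k,
        x - y ∈ qfilt σ (q : Set L) k := by
      intro x hx y hy
      have := hA x hx ((-1 : ℂ) • y) (hM (-1) y hy)
      simpa [sub_eq_add_neg] using this
    refine ⟨?_, ?_, ?_, ?_⟩
    · refine ⟨h0, fun u hu => ⟨0, h0, 0, q.zero_mem, ?_⟩⟩
      simp [hσ0]
    · rintro x ⟨hx, hx'⟩ y ⟨hy, hy'⟩
      refine ⟨hA x hx y hy, fun u hu => ?_⟩
      obtain ⟨a, ha, b, hb, hab⟩ := hx' u hu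
      obtain ⟨a', ha', b', hb', hab'⟩ := hy' u hu
      refine ⟨a + a', hA a ha a' ha', b + b', q.add_mem hb hb', ?_⟩
      rw [add_lie, hab, hab', hadd]
      abel
    · rintro c x ⟨hx, hx'⟩
      refine ⟨hM c x hx, fun u hu => ?_⟩
      obtain ⟨a, ha, b, hb, hab⟩ := hx' u hu
      refine ⟨c • a, hM c a ha, (starRingEnd ℂ) c • b, q.smul_mem _ hb, ?_⟩
      rw [smul_lie, hab, smul_add, hsmul]
      simp
    · rintro x hx y hy
      obtain ⟨hx1, hx2⟩ := hx
      obtain ⟨hy1, hy2⟩ := hy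
      refine ⟨hB x hx1 y hy1, fun u hu => ?_⟩
      obtain ⟨a, ha, b, hb, hab⟩ := hy2 u hu
      obtain ⟨a', ha', b', hb', hab'⟩ := hx2 u hu
      obtain ⟨c, hc, d, hd, hcd⟩ := hx2 b hb
      obtain ⟨c', hc', d', hd', hcd'⟩ := hy2 b' hb'
      refine ⟨⁅x, a⁆ + c - (⁅y, a'⁆ + c'),
        hSub _ (hA _ (hB x hx1 a ha) c hc) _ (hA _ (hB y hy1 a' ha') c' hc'),
        d - d', q.sub_mem hd hd', ?_⟩
      rw [lie_lie, hab, hab', lie_add, lie_add, hcd, hcd',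
        sub_eq_add_neg d d', hadd, hneg]
      abel

end Aux

/-- If `𝔮⁽ⁿ⁾ = 𝔮⁽ⁿ⁺¹⁾` for some `n`, then `𝔮⁽ⁿ⁾ + σ𝔮` is a complex
Lie subalgebra of `𝔩`. -/
theorem stabilized_sum_is_subalgebra
    (L : Type*) [LieRing L] [LieAlgebra ℂ L]
    (σ : L → L)
    (hadd : ∀ x y : L, σ (x + y) = σ x + σ y)
    (hsmul : ∀ (c : ℂ) (x : L), σ (c • x) = (starRingEnd ℂ) c • σ x)
    (hbr : ∀ x y : L, σ ⁅x, y⁆ = ⁅σ x, σ y⁆)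
    (hinv : ∀ x : L, σ (σ x) = x)
    (q : LieSubalgebra ℂ L) (n : ℕ)
    (hstab : qfilt σ (q : Set L) n = qfilt σ (q : Set L) (n + 1))
    (S : Set L)
    (hS : S = {x | ∃ a ∈ qfilt σ (q : Set L) n, ∃ b ∈ q, x = a + σ b}) :
    (∀ x ∈ S, ∀ y ∈ S, x + y ∈ S) ∧
    (∀ (c : ℂ), ∀ x ∈ S, c • x ∈ S) ∧
    (∀ x ∈ S, ∀ y ∈ S, ⁅x, y⁆ ∈ S) := by
  subst hS
  obtain ⟨h0, hA, hM, hB⟩ := qfilt_closed σ hadd hsmul q n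
  have hneg : ∀ x : L, σ (-x) = - σ x := by
    intro x; have := hsmul (-1) x; simpa using this
  have hP : ∀ w ∈ qfilt σ (q : Set L) n, ∀ u ∈ q,
      ∃ a ∈ qfilt σ (q : Set L) n, ∃ b ∈ q, ⁅w, σ u⁆ = a + σ b := by
    intro w hw
    rw [hstab] at hw
    exact hw.2
  have hSub : ∀ x ∈ qfilt σ (q : Set L) n, ∀ y ∈ qfilt σ (q : Set L) n,
      x - y ∈ qfilt σ (q : Set L) n := by
    intro x hx y hy
    have := hA x hx ((-1 : ℂ) • y) (hM (-1) y hy)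
    simpa [sub_eq_add_neg] using this
  refine ⟨?_, ?_, ?_⟩
  · rintro x ⟨a, ha, b, hb, rfl⟩ y ⟨a', ha', b', hb', rfl⟩
    refine ⟨a + a', hA a ha a' ha', b + b', q.add_mem hb hb', ?_⟩
    rw [hadd]; abel
  · rintro c x ⟨a, ha, b, hb, rfl⟩
    refine ⟨c • a, hM c a ha, (starRingEnd ℂ) c • b, q.smul_mem _ hb, ?_⟩
    rw [smul_add, hsmul]
    simp
  · rintro x ⟨a, ha, b, hb, rfl⟩ y ⟨a', ha', b', hb', rfl⟩
    obtain ⟨c1, hc1, d1, hd1, h1⟩ := hP a ha b' hb'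
    obtain ⟨c2, hc2, d2, hd2, h2⟩ := hP a' ha' b hb
    have hskew : ⁅σ b, a'⁆ = -(c2 + σ d2) := by
      rw [← h2, ← lie_skew]
    refine ⟨⁅a, a'⁆ + c1 - c2,
      hSub _ (hA _ (hB a ha a' ha') c1 hc1) c2 hc2,
      d1 - d2 + ⁅b, b'⁆, q.add_mem (q.sub_mem hd1 hd2) (q.lie_mem hb hb'), ?_⟩
    rw [add_lie, lie_add, lie_add, h1, hskew, ← hbr,
      hadd, sub_eq_add_neg d1 d2, hadd, hneg]
    abel
end

section
/- Let 𝔩 = ⨁_{j=-c}^{c} 𝔩_j be a ℤ-graded Lie algebra (so [𝔩_i, 𝔩_j] ⊆ 𝔩_{i+j}), let 𝔮 = ⨁_{j=-c}^{0} 𝔩_j, and let 𝔫 ⊆ ⨁_{j>0} 𝔩_j be a graded subspace. Define subspaces q⁽ˡ⁾ ⊆ 𝔮 by q⁽⁰⁾ = 𝔮 and q⁽ˡ⁺¹⁾ = { w ∈ q⁽ˡ⁾ : [w, 𝔫] ⊆ q⁽ˡ⁾ + 𝔫 }, and assume each q⁽ˡ⁾ is graded, q⁽ˡ⁾ = ⨁_j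 q⁽ˡ⁾_j with q⁽ˡ⁾_j = q⁽ˡ⁾ ∩ 𝔩_j, and that membership in q⁽ˡ⁺¹⁾ is equivalent to: for all j, [q⁽ˡ⁺¹⁾_j, 𝔫] ⊆ q⁽ˡ⁾_{j+1} ⊕ ⋯ ⊕ q⁽ˡ⁾_0 ⊕ 𝔫. Then for every p ≥ 0 one has q⁽ᵖ⁺¹⁾_{-p} = q⁽ᵖ⁺²⁾_{-p} = ⋯ ; that is, the (-p)-graded component of the filtration stabilizes after step p+1. -/
/-- Graded stabilization: in a ℤ-graded Lie algebra `𝔩 = ⨁_{j=-c}^{c} 𝔩_j`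
with `𝔮 = ⨁_{j≤0} 𝔩_j`, a graded subspace `𝔫` of the positive part, and the
recursive filtration `q⁽⁰⁾ = 𝔮`, `q⁽ˡ⁺¹⁾ = {w ∈ q⁽ˡ⁾ : [w,𝔫] ⊆ q⁽ˡ⁾ + 𝔫}`
given degreewise by components `Q l j`, the `(-p)`-component stabilizes after
step `p + 1`: `q⁽ᵖ⁺¹⁾_{-p} = q⁽ᵖ⁺²⁾_{-p} = ⋯`. -/
theorem graded_component_stabilizes
    (L : Type*) [LieRing L] [LieAlgebra ℂ L]
    (c : ℕ)
    (ℓ : ℤ → Submodule ℂ L)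
    (hgrade : ∀ i j : ℤ, ∀ x ∈ ℓ i, ∀ y ∈ ℓ j, ⁅x, y⁆ ∈ ℓ (i + j))
    (hsupp : ∀ j : ℤ, (j < -(c : ℤ) ∨ (c : ℤ) < j) → ℓ j = ⊥)
    (n : Submodule ℂ L)
    (hn : n ≤ ⨆ j > (0 : ℤ), ℓ j)
    (Q : ℕ → ℤ → Submodule ℂ L)
    (hQ0 : ∀ j : ℤ, (j ≤ 0 → Q 0 j = ℓ j) ∧ (0 < j → Q 0 j = ⊥))
    (hQj : ∀ (l : ℕ) (j : ℤ), Q l j ≤ ℓ j)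
    (hdec : ∀ (l : ℕ) (j : ℤ), Q (l + 1) j ≤ Q l j)
    (hchar : ∀ (l : ℕ) (j : ℤ) (w : L), w ∈ Q (l + 1) j ↔
      (w ∈ Q l j ∧ ∀ x ∈ n, ⁅w, x⁆ ∈ ((⨆ i ∈ Set.Ioc j (0 : ℤ), Q l i) ⊔ n))) :
    ∀ p : ℕ, ∀ l : ℕ, p + 1 ≤ l → Q l (-(p : ℤ)) = Q (p + 1) (-(p : ℤ)) := by
  intro p
  induction p using Nat.strong_induction_on with
  | _ p IH =>
    intro l hl
    induction l, hl using Nat.le_induction with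
    | base => rfl
    | succ l hl ihl =>
      rw [← ihl]
      refine le_antisymm (hdec l _) ?_
      intro w hw
      obtain ⟨m, rfl⟩ : ∃ m, l = m + 1 := ⟨l - 1, by omega⟩
      obtain ⟨hw0, hw1⟩ := (hchar m _ w).mp hw
      rw [hchar]
      refine ⟨hw, fun x hx => ?_⟩
      refine SetLike.le_def.mp ?_ (hw1 x hx)
      apply sup_le_sup_right
      refine iSup₂_le fun i hi => ?_
      have h1 : -(p : ℤ) < i ∧ i ≤ 0 := hi
      have hip : i = -(((-i).toNat : ℕ) : ℤ) := by omega
      set p' := (-i).toNat with hp'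
      have e1 : Q m i = Q (p' + 1) i := by
        rw [hip]; exact IH p' (by omega) m (by omega)
      have e2 : Q (m + 1) i = Q (p' + 1) i := by
        rw [hip]; exact IH p' (by omega) (m + 1) (by omega)
      rw [e1, ← e2]
      exact le_biSup (fun i => Q (m + 1) i) hi
end

section
/- Under the hypotheses of the graded stabilization claim, the filtration q⁽⁰⁾ ⊇ q⁽¹⁾ ⊇ ⋯ becomes stationary after at most c+1 steps: q⁽ᶜ⁺¹⁾ = q⁽ᶜ⁺²⁾ = ⋯. -/
/-- Under the graded hypotheses the filtration `q⁽⁰⁾ ⊇ q⁽¹⁾ ⊇ ⋯` becomes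
stationary after at most `c + 1` steps: `q⁽ᶜ⁺¹⁾ = q⁽ᶜ⁺²⁾ = ⋯`. -/
theorem graded_filtration_stationary
    (L : Type*) [LieRing L] [LieAlgebra ℂ L]
    (c : ℕ)
    (ℓ : ℤ → Submodule ℂ L)
    (hgrade : ∀ i j : ℤ, ∀ x ∈ ℓ i, ∀ y ∈ ℓ j, ⁅x, y⁆ ∈ ℓ (i + j))
    (hsupp : ∀ j : ℤ, (j < -(c : ℤ) ∨ (c : ℤ) < j) → ℓ j = ⊥)
    (n : Submodule ℂ L)
    (hn : n ≤ ⨆ j > (0 : ℤ), ℓ j)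
    (Q : ℕ → ℤ → Submodule ℂ L)
    (hQ0 : ∀ j : ℤ, (j ≤ 0 → Q 0 j = ℓ j) ∧ (0 < j → Q 0 j = ⊥))
    (hQj : ∀ (l : ℕ) (j : ℤ), Q l j ≤ ℓ j)
    (hdec : ∀ (l : ℕ) (j : ℤ), Q (l + 1) j ≤ Q l j)
    (hchar : ∀ (l : ℕ) (j : ℤ) (w : L), w ∈ Q (l + 1) j ↔
      (w ∈ Q l j ∧ ∀ x ∈ n, ⁅w, x⁆ ∈ ((⨆ i ∈ Set.Ioc j (0 : ℤ), Q l i) ⊔ n))) :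
    ∀ l : ℕ, c + 1 ≤ l → ∀ j : ℤ, Q l j = Q (c + 1) j := by
  -- key step lemma: for j > -l, Q (l+1) j = Q l j
  have step : ∀ l : ℕ, ∀ j : ℤ, -(l : ℤ) < j → Q (l + 1) j = Q l j := by
    intro l
    induction l with
    | zero =>
      intro j hj
      have h1 : Q 0 j = ⊥ := (hQ0 j).2 (by exact_mod_cast hj)
      have h2 : Q 1 j ≤ Q 0 j := hdec 0 j
      rw [h1] at h2 ⊢
      exact le_bot_iff.mp h2
    | succ l ih =>
      intro j hj
      apply le_antisymm (hdec (l + 1) j)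
      intro w hw
      obtain ⟨hwQ, hwb⟩ := (hchar l j w).mp hw
      rw [hchar (l + 1) j w]
      refine ⟨hw, fun x hx => ?_⟩
      have hsup : (⨆ i ∈ Set.Ioc j (0 : ℤ), Q (l + 1) i)
          = ⨆ i ∈ Set.Ioc j (0 : ℤ), Q l i := by
        apply biSup_congr
        intro i hi
        apply ih
        have hji : j < i := hi.1
        have : -(l : ℤ) ≤ j := by
          have := hj
          push_cast at this ⊢
          omega
        omega
      rw [hsup]
      exact hwb x hx
  intro l hl j
  induction l, hl using Nat.le_induction with
  | base => rfl
  | succ l hl ih =>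
    by_cases hj : j < -(c : ℤ)
    · have h1 : Q (l + 1) j = ⊥ := le_bot_iff.mp (le_trans (hQj _ j) (hsupp j (Or.inl hj)).le)
      have h2 : Q (c + 1) j = ⊥ := le_bot_iff.mp (le_trans (hQj _ j) (hsupp j (Or.inl hj)).le)
      rw [h1, h2]
    · push_neg at hj
      have hjl : -(l : ℤ) < j := by
        have : (c : ℤ) + 1 ≤ (l : ℤ) := by exact_mod_cast hl
        omega
      rw [step l j hjl]
      exact ih
end
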